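/- arXiv:2301.07683 — 12 statements merged into one kernel-verified Lean document; each statement's English description precedes it below -/
import Mathlib

section
/- For m > 1, the function Υ̃(r) = ((m-1)²/m)·Υ(m r/(m-1)) − (m-1)·Υ(r), where Υ(r) = e^r − 1 − r, is nonnegative for all real r. -/
theorem tildeUpsilon_nonneg (m : ℝ) (hm : 1 < m) (r : ℝ) :
    0 ≤ ((m - 1) ^ 2 / m) * (Real.exp ((m / (m - 1)) * r) - 1 - (m / (m - 1)) * r)
        - (m - 1) * (Real.exp r - 1 - r) := by
  have hm1 : (0:ℝ) < m - 1 := by linarith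
  have hm0 : (0:ℝ) < m := by linarith
  have hc : 1 ≤ m / (m - 1) := by rw [le_div_iff₀ hm1]; linarith
  have hs : (-1:ℝ) ≤ Real.exp r - 1 := by have := Real.exp_pos r; linarith
  have hb := one_add_mul_self_le_rpow_one_add hs hc
  have he : (1 + (Real.exp r - 1)) ^ (m / (m - 1)) = Real.exp (m / (m - 1) * r) := by
    rw [show (1 + (Real.exp r - 1)) = Real.exp r by ring, ← Real.exp_mul, mul_comm]
  rw [he] at hb
  have hkey : ((m - 1) ^ 2 / m) * (m / (m - 1)) = m - 1 := by field_simp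
  have hpos : (0:ℝ) < (m - 1) ^ 2 / m := by positivity
  have hb' := mul_le_mul_of_nonneg_left hb hpos.le
  have e1 : ((m - 1) ^ 2 / m) * (1 + m / (m - 1) * (Real.exp r - 1))
      = ((m - 1) ^ 2 / m) + (m - 1) * (Real.exp r - 1) := by
    field_simp
  have e2 : ((m - 1) ^ 2 / m) * (Real.exp ((m / (m - 1)) * r) - 1 - (m / (m - 1)) * r)
      = ((m - 1) ^ 2 / m) * Real.exp ((m / (m - 1)) * r) - ((m - 1) ^ 2 / m)
        - (m - 1) * r := by
    field_simp
  rw [e1] at hb'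
  rw [e2]
  linarith
end

section
/- For u, v > 0 with the parametrization v_m = (m/(m-1))u^{m-1}, one has lim_{m→1⁺} [ ((m-1)/m)·v_m(x)² + ((m-1)²/m)·v_m(x)^{(m-2)/(m-1)} v_m(y)^{m/(m-1)} − (m-1) v_m(x) v_m(y) ] = u(y)/u(x) − 1 − log(u(y)/u(x)) for any u(x), u(y) > 0. -/
open Real Filter

private lemma tendsto_sub_one_aux :
    Tendsto (fun m : ℝ => m - 1) (nhdsWithin 1 (Set.Ioi 1)) (nhdsWithin 0 (Set.Ioi 0)) := by
  apply tendsto_nhdsWithin_of_tendsto_nhds_of_eventually_within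
  · have : Tendsto (fun m : ℝ => m - 1) (nhds 1) (nhds (1 - 1)) :=
      (tendsto_id : Tendsto _ (nhds (1:ℝ)) _).sub_const 1
    exact (by simpa using this : Tendsto (fun m : ℝ => m - 1) (nhds 1) (nhds 0)).mono_left
      nhdsWithin_le_nhds
  · filter_upwards [self_mem_nhdsWithin] with m hm
    simpa using (Set.mem_Ioi.1 hm)

private lemma slope_limit_aux {c d : ℝ} (hc : 0 < c) (hd : 0 < d) :
    Tendsto (fun t : ℝ => (c ^ (2 * t) - d ^ t) / t) (nhdsWithin 0 (Set.Ioi 0))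
      (nhds (2 * Real.log c - Real.log d)) := by
  set g : ℝ → ℝ := fun t => Real.exp (Real.log c * (2 * t)) - Real.exp (Real.log d * t) with hg
  have h1 : HasDerivAt (fun t : ℝ => Real.log c * (2 * t)) (Real.log c * (2 * 1)) 0 :=
    ((hasDerivAt_id (0 : ℝ)).const_mul 2).const_mul (Real.log c)
  have h2 : HasDerivAt (fun t : ℝ => Real.log d * t) (Real.log d * 1) 0 :=
    (hasDerivAt_id (0 : ℝ)).const_mul (Real.log d)
  have hgd : HasDerivAt g (2 * Real.log c - Real.log d) 0 := by
    have := (h1.exp.sub h2.exp)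
    simpa [hg, mul_comm, Pi.sub_def] using this
  have hslope : Tendsto (slope g 0) (nhdsWithin 0 {(0 : ℝ)}ᶜ)
      (nhds (2 * Real.log c - Real.log d)) := hasDerivAt_iff_tendsto_slope.1 hgd
  have hsub : Tendsto (slope g 0) (nhdsWithin 0 (Set.Ioi 0))
      (nhds (2 * Real.log c - Real.log d)) :=
    hslope.mono_left (nhdsWithin_mono _ (fun x hx => ne_of_gt (Set.mem_Ioi.1 hx)))
  refine hsub.congr' ?_
  filter_upwards [self_mem_nhdsWithin] with t ht
  have ht0 : t ≠ 0 := ne_of_gt (Set.mem_Ioi.1 ht)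
  have hgt : g t = c ^ (2 * t) - d ^ t := by
    rw [hg]
    simp only [Real.rpow_def_of_pos hc, Real.rpow_def_of_pos hd]
  have hg0 : g 0 = 0 := by simp [hg]
  rw [slope_def_field, hgt, hg0]
  field_simp
  ring

theorem tildePsi_summand_limit (ux uy : ℝ) (hux : 0 < ux) (huy : 0 < uy) :
    Tendsto (fun m : ℝ =>
        ((m - 1) / m) * ((m / (m - 1)) * ux ^ (m - 1)) ^ (2 : ℕ)
          + ((m - 1) ^ 2 / m) * ((m / (m - 1)) * ux ^ (m - 1)) ^ ((m - 2) / (m - 1))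
              * ((m / (m - 1)) * uy ^ (m - 1)) ^ (m / (m - 1))
          - (m - 1) * ((m / (m - 1)) * ux ^ (m - 1)) * ((m / (m - 1)) * uy ^ (m - 1)))
      (nhdsWithin 1 (Set.Ioi 1))
      (nhds (uy / ux - 1 - Real.log (uy / ux))) := by
  set F := nhdsWithin (1 : ℝ) (Set.Ioi 1) with hF
  -- the simplified form
  have key : ∀ m ∈ Set.Ioi (1 : ℝ),
      ((m - 1) / m) * ((m / (m - 1)) * ux ^ (m - 1)) ^ (2 : ℕ)
        + ((m - 1) ^ 2 / m) * ((m / (m - 1)) * ux ^ (m - 1)) ^ ((m - 2) / (m - 1))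
            * ((m / (m - 1)) * uy ^ (m - 1)) ^ (m / (m - 1))
        - (m - 1) * ((m / (m - 1)) * ux ^ (m - 1)) * ((m / (m - 1)) * uy ^ (m - 1))
      = m * ((ux ^ (2 * (m - 1)) - (ux * uy) ^ (m - 1)) / (m - 1))
          - m * ((ux * uy) ^ (m - 1)) + m * (ux ^ (m - 2) * uy ^ m) := by
    intro m hm
    have hm1 : (0 : ℝ) < m - 1 := sub_pos.2 (Set.mem_Ioi.1 hm)
    have hm0 : (0 : ℝ) < m := lt_trans one_pos (Set.mem_Ioi.1 hm)
    have hc : (0 : ℝ) < m / (m - 1) := div_pos hm0 hm1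
    have ea : (ux ^ (m - 1)) ^ ((m - 2) / (m - 1)) = ux ^ (m - 2) := by
      rw [← Real.rpow_mul hux.le]
      congr 1
      field_simp
    have eb : (uy ^ (m - 1)) ^ (m / (m - 1)) = uy ^ m := by
      rw [← Real.rpow_mul huy.le]
      congr 1
      field_simp
    have ec : (m / (m - 1)) ^ ((m - 2) / (m - 1)) * (m / (m - 1)) ^ (m / (m - 1))
        = (m / (m - 1)) ^ (2 : ℕ) := by
      rw [← Real.rpow_add hc]
      have he : (m - 2) / (m - 1) + m / (m - 1) = 2 := by
        field_simp
        ring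
      rw [he, show (2 : ℝ) = ((2 : ℕ) : ℝ) by norm_num, Real.rpow_natCast]
    have h2 : ((m - 1) ^ 2 / m) * ((m / (m - 1)) * ux ^ (m - 1)) ^ ((m - 2) / (m - 1))
        * ((m / (m - 1)) * uy ^ (m - 1)) ^ (m / (m - 1)) = m * (ux ^ (m - 2) * uy ^ m) := by
      rw [Real.mul_rpow hc.le (Real.rpow_nonneg hux.le _),
          Real.mul_rpow hc.le (Real.rpow_nonneg huy.le _), ea, eb]
      have : ((m - 1) ^ 2 / m) * ((m / (m - 1)) ^ ((m - 2) / (m - 1)) * ux ^ (m - 2))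
          * ((m / (m - 1)) ^ (m / (m - 1)) * uy ^ m)
          = ((m - 1) ^ 2 / m) * ((m / (m - 1)) ^ ((m - 2) / (m - 1))
              * (m / (m - 1)) ^ (m / (m - 1))) * (ux ^ (m - 2) * uy ^ m) := by ring
      rw [this, ec]
      have hcoef : ((m - 1) ^ 2 / m) * (m / (m - 1)) ^ (2 : ℕ) = m := by
        field_simp
      rw [hcoef]
    have hX : ux ^ (2 * (m - 1)) = ux ^ (m - 1) * ux ^ (m - 1) := by
      rw [← Real.rpow_add hux]
      ring_nf
    have hPQ : (ux * uy) ^ (m - 1) = ux ^ (m - 1) * uy ^ (m - 1) :=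
      Real.mul_rpow hux.le huy.le
    rw [h2, hX, hPQ]
    field_simp
    ring
  -- limits of the pieces
  have hid : Tendsto (fun m : ℝ => m) F (nhds 1) := tendsto_id.mono_left nhdsWithin_le_nhds
  have hA : Tendsto (fun m : ℝ => (ux ^ (2 * (m - 1)) - (ux * uy) ^ (m - 1)) / (m - 1)) F
      (nhds (2 * Real.log ux - Real.log (ux * uy))) :=
    (slope_limit_aux hux (mul_pos hux huy)).comp tendsto_sub_one_aux
  have hB : Tendsto (fun m : ℝ => (ux * uy) ^ (m - 1)) F (nhds 1) := by
    have hcont : Tendsto (fun m : ℝ => Real.exp (Real.log (ux * uy) * (m - 1))) (nhds 1)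
        (nhds (Real.exp (Real.log (ux * uy) * (1 - 1)))) :=
      (Real.continuous_exp.comp (continuous_const.mul (continuous_id.sub continuous_const))).tendsto 1
    have : Tendsto (fun m : ℝ => Real.exp (Real.log (ux * uy) * (m - 1))) F (nhds 1) := by
      simpa using hcont.mono_left nhdsWithin_le_nhds
    refine this.congr (fun m => ?_)
    rw [Real.rpow_def_of_pos (mul_pos hux huy)]
  have hC : Tendsto (fun m : ℝ => ux ^ (m - 2) * uy ^ m) F (nhds (ux⁻¹ * uy)) := by
    have hcont : Tendsto (fun m : ℝ => Real.exp (Real.log ux * (m - 2)) * Real.exp (Real.log uy * m))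
        (nhds 1) (nhds (Real.exp (Real.log ux * (1 - 2)) * Real.exp (Real.log uy * 1))) :=
      ((Real.continuous_exp.comp (continuous_const.mul (continuous_id.sub continuous_const))).mul
        (Real.continuous_exp.comp (continuous_const.mul continuous_id))).tendsto 1
    have hval : Real.exp (Real.log ux * (1 - 2)) * Real.exp (Real.log uy * 1) = ux⁻¹ * uy := by
      rw [show Real.log ux * (1 - 2) = -Real.log ux by ring, Real.exp_neg, Real.exp_log hux,
        mul_one, Real.exp_log huy]
    have : Tendsto (fun m : ℝ => Real.exp (Real.log ux * (m - 2)) * Real.exp (Real.log uy * m)) F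
        (nhds (ux⁻¹ * uy)) := by
      rw [← hval]
      exact hcont.mono_left nhdsWithin_le_nhds
    refine this.congr (fun m => ?_)
    rw [Real.rpow_def_of_pos hux, Real.rpow_def_of_pos huy]
  have hmain : Tendsto (fun m : ℝ =>
      m * ((ux ^ (2 * (m - 1)) - (ux * uy) ^ (m - 1)) / (m - 1))
        - m * ((ux * uy) ^ (m - 1)) + m * (ux ^ (m - 2) * uy ^ m)) F
      (nhds (1 * (2 * Real.log ux - Real.log (ux * uy)) - 1 * 1 + 1 * (ux⁻¹ * uy))) :=
    ((hid.mul hA).sub (hid.mul hB)).add (hid.mul hC)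
  have hval : 1 * (2 * Real.log ux - Real.log (ux * uy)) - 1 * 1 + 1 * (ux⁻¹ * uy)
      = uy / ux - 1 - Real.log (uy / ux) := by
    rw [Real.log_mul hux.ne' huy.ne', Real.log_div huy.ne' hux.ne']
    field_simp
    ring
  rw [← hval]
  refine hmain.congr' ?_
  filter_upwards [self_mem_nhdsWithin] with m hm
  exact (key m hm).symm
end

section
/- For m > 2 and all z ∈ (0,1), the inequality ν·m·(z^{m-2} − z^{2m-2} − z^m + 1) ≥ (m²/(m-1)²)·(z^{2m-2} − 2z^{m-1} + 1) holds with ν = m/(m-1)², i.e. z^{m-2} − 2z^{2m-2} − z^m + 2z^{m-1} ≥ 0 for all z ∈ (0,1). -/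
theorem twoPoint_CD_sufficient (m : ℝ) (hm : 2 < m) (z : ℝ) (hz : z ∈ Set.Ioo (0 : ℝ) 1) :
    (m / (m - 1) ^ 2) * m * (z ^ (m - 2) - z ^ (2 * m - 2) - z ^ m + 1)
      ≥ (m ^ 2 / (m - 1) ^ 2) * (z ^ (2 * m - 2) - 2 * z ^ (m - 1) + 1) ∧
    z ^ (m - 2) - 2 * z ^ (2 * m - 2) - z ^ m + 2 * z ^ (m - 1) ≥ 0 := by
  obtain ⟨hz0, hz1⟩ := hz
  have h2m : z ^ (2 * m - 2) = z ^ (m - 2) * z ^ m := by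
    rw [← Real.rpow_add hz0]; ring_nf
  have hzm : z ^ m = z ^ (m - 2) * z ^ (2 : ℝ) := by
    rw [← Real.rpow_add hz0]; ring_nf
  have hzm1 : z ^ (m - 1) = z ^ (m - 2) * z ^ (1 : ℝ) := by
    rw [← Real.rpow_add hz0]; ring_nf
  have hz2 : z ^ (2 : ℝ) = z * z := by
    rw [show (2:ℝ) = ((2:ℕ):ℝ) by norm_num, Real.rpow_natCast]; ring
  have hz1' : z ^ (1 : ℝ) = z := Real.rpow_one z
  have ha : 0 < z ^ (m - 2) := Real.rpow_pos_of_pos hz0 _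
  have hle : z ^ m ≤ z ^ (2 : ℝ) :=
    Real.rpow_le_rpow_of_exponent_ge hz0 hz1.le (by linarith)
  have hA1 : z ^ (m - 2) ≤ 1 := Real.rpow_le_one hz0.le hz1.le (by linarith)
  have key : z ^ (m - 2) - 2 * z ^ (2 * m - 2) - z ^ m + 2 * z ^ (m - 1) ≥ 0 := by
    rw [h2m, hzm, hzm1, hz2, hz1']
    have hinner : 1 + 2 * z - z * z - 2 * (z ^ (m - 2) * (z * z)) ≥ 0 := by
      have h1 : z ^ (m - 2) * (z * z) ≤ z * z :=
        mul_le_of_le_one_left (mul_pos hz0 hz0).le hA1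
      have h2 : (1 - z) * (1 + 3 * z) ≥ 0 :=
        mul_nonneg (by linarith) (by linarith)
      set u := z ^ (m - 2) with hu
      clear_value u
      clear hu hz2 hz1' hle h2m hzm hzm1 hA1 ha
      nlinarith [h1, h2]
    nlinarith [mul_nonneg ha.le hinner]
  refine ⟨?_, key⟩
  have hc : 0 < m ^ 2 / (m - 1) ^ 2 := div_pos (pow_pos (by linarith) 2) (pow_pos (by linarith) 2)
  have heq : m / (m - 1) ^ 2 * m = m ^ 2 / (m - 1) ^ 2 := by ring
  rw [heq]
  have : z ^ (m - 2) - z ^ (2 * m - 2) - z ^ m + 1 - (z ^ (2 * m - 2) - 2 * z ^ (m - 1) + 1) ≥ 0 := by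
    linarith [key]
  nlinarith [hc, this]
end

section
/- For m > 2, the constant ν = m/(m-1)² is necessary for the 2-point CD inequality: if ν > 0 satisfies ν·m·(z^{m-2} − z^{2m-2} − z^m + 1) ≥ (m²/(m-1)²)·(z^{2m-2} − 2z^{m-1} + 1) for all z ∈ (0,1), then ν ≥ m/(m-1)². -/
open Filter Topology

theorem twoPoint_CD_necessary (m : ℝ) (hm : 2 < m) (ν : ℝ) (hν : 0 < ν)
    (h : ∀ z ∈ Set.Ioo (0 : ℝ) 1,
        ν * m * (z ^ (m - 2) - z ^ (2 * m - 2) - z ^ m + 1)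
          ≥ (m ^ 2 / (m - 1) ^ 2) * (z ^ (2 * m - 2) - 2 * z ^ (m - 1) + 1)) :
    ν ≥ m / (m - 1) ^ 2 := by
  have hpow : ∀ c : ℝ, 0 < c →
      Tendsto (fun z : ℝ => z ^ c) (𝓝[>] (0:ℝ)) (𝓝 0) := by
    intro c hc
    have := (Real.continuousAt_rpow_const 0 c (Or.inr hc.le)).tendsto
    rw [Real.zero_rpow hc.ne'] at this
    exact this.mono_left nhdsWithin_le_nhds
  have h1 : Tendsto (fun z : ℝ =>
      ν * m * (z ^ (m - 2) - z ^ (2 * m - 2) - z ^ m + 1)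
        - (m ^ 2 / (m - 1) ^ 2) * (z ^ (2 * m - 2) - 2 * z ^ (m - 1) + 1))
      (𝓝[>] (0:ℝ)) (𝓝 (ν * m * (0 - 0 - 0 + 1) - (m ^ 2 / (m - 1) ^ 2) * (0 - 2 * 0 + 1))) := by
    have ha := hpow (m - 2) (by linarith)
    have hb := hpow (2 * m - 2) (by linarith)
    have hcm := hpow m (by linarith)
    have hd := hpow (m - 1) (by linarith)
    exact ((tendsto_const_nhds.mul (((ha.sub hb).sub hcm).add tendsto_const_nhds)).sub
      (tendsto_const_nhds.mul ((hb.sub (tendsto_const_nhds.mul hd)).add tendsto_const_nhds)))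
  have hev : ∀ᶠ z in 𝓝[>] (0:ℝ),
      0 ≤ ν * m * (z ^ (m - 2) - z ^ (2 * m - 2) - z ^ m + 1)
        - (m ^ 2 / (m - 1) ^ 2) * (z ^ (2 * m - 2) - 2 * z ^ (m - 1) + 1) := by
    filter_upwards [Ioo_mem_nhdsGT_of_mem (by norm_num : (0:ℝ) ∈ Set.Ico (0:ℝ) 1)] with z hz
    have := h z hz
    linarith
  have hlim : 0 ≤ ν * m * (0 - 0 - 0 + 1) - (m ^ 2 / (m - 1) ^ 2) * (0 - 2 * 0 + 1) :=
    ge_of_tendsto h1 hev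
  have h2 : 0 < (m - 1) ^ 2 := by nlinarith
  have h3 : m ^ 2 / (m - 1) ^ 2 ≤ ν * m := by linarith
  rw [ge_iff_le, div_le_iff₀ h2]
  rw [div_le_iff₀ h2] at h3
  nlinarith
end

section
/- For m > 2 and z₁, z₂ ∈ (0,1], the inequality z₁^{m-2}z₂^m + z₂^{m-2}z₁^m + z₁^{m-2} + z₂^{m-2} − 2z₁^{2m-2} − 2z₂^{2m-2} − 2z₁^m − 2z₂^m − (z₁^{m-1} + z₂^{m-1})² + 4z₁^{m-1} + 4z₂^{m-1} ≥ 0 holds. -/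
theorem threePoint_CD_sufficient (m : ℝ) (hm : 2 < m) (z₁ z₂ : ℝ)
    (hz₁ : z₁ ∈ Set.Ioc (0 : ℝ) 1) (hz₂ : z₂ ∈ Set.Ioc (0 : ℝ) 1) :
    z₁ ^ (m - 2) * z₂ ^ m + z₂ ^ (m - 2) * z₁ ^ m + z₁ ^ (m - 2) + z₂ ^ (m - 2)
      - 2 * z₁ ^ (2 * m - 2) - 2 * z₂ ^ (2 * m - 2) - 2 * z₁ ^ m - 2 * z₂ ^ m
      - (z₁ ^ (m - 1) + z₂ ^ (m - 1)) ^ (2 : ℕ)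
      + 4 * z₁ ^ (m - 1) + 4 * z₂ ^ (m - 1) ≥ 0 := by
  obtain ⟨hx, hx1⟩ := hz₁
  obtain ⟨hy, hy1⟩ := hz₂
  have hxm : z₁ ^ (m - 2) ≤ 1 :=
    Real.rpow_le_one hx.le hx1 (by linarith)
  have hym : z₂ ^ (m - 2) ≤ 1 :=
    Real.rpow_le_one hy.le hy1 (by linarith)
  have hxm0 : 0 < z₁ ^ (m - 2) := Real.rpow_pos_of_pos hx _
  have hym0 : 0 < z₂ ^ (m - 2) := Real.rpow_pos_of_pos hy _
  have e1 : z₁ ^ (m - 1) = z₁ ^ (m - 2) * z₁ := by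
    rw [show m - 1 = (m - 2) + 1 by ring, Real.rpow_add hx, Real.rpow_one]
  have e2 : z₂ ^ (m - 1) = z₂ ^ (m - 2) * z₂ := by
    rw [show m - 1 = (m - 2) + 1 by ring, Real.rpow_add hy, Real.rpow_one]
  have e3 : z₁ ^ m = z₁ ^ (m - 2) * z₁ ^ (2 : ℕ) := by
    rw [show m = (m - 2) + (2 : ℕ) by push_cast; ring, Real.rpow_add hx,
      Real.rpow_natCast]; norm_num
  have e4 : z₂ ^ m = z₂ ^ (m - 2) * z₂ ^ (2 : ℕ) := by
    rw [show m = (m - 2) + (2 : ℕ) by push_cast; ring, Real.rpow_add hy,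
      Real.rpow_natCast]; norm_num
  have e5 : z₁ ^ (2 * m - 2) = (z₁ ^ (m - 2) * z₁) ^ (2 : ℕ) := by
    rw [← e1, show 2 * m - 2 = (m - 1) * (2 : ℕ) by push_cast; ring,
      Real.rpow_mul hx.le, Real.rpow_natCast]
  have e6 : z₂ ^ (2 * m - 2) = (z₂ ^ (m - 2) * z₂) ^ (2 : ℕ) := by
    rw [← e2, show 2 * m - 2 = (m - 1) * (2 : ℕ) by push_cast; ring,
      Real.rpow_mul hy.le, Real.rpow_natCast]
  set A := z₁ ^ (m - 2)
  set B := z₂ ^ (m - 2)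
  rw [e1, e2, e3, e4, e5, e6]
  nlinarith [mul_nonneg (mul_nonneg hxm0.le hym0.le) (sq_nonneg (z₁ - z₂)),
    mul_nonneg (mul_nonneg hxm0.le (by linarith : (0:ℝ) ≤ 1 - z₁))
      (by linarith : (0:ℝ) ≤ 1 + 5 * z₁),
    mul_nonneg (mul_nonneg hym0.le (by linarith : (0:ℝ) ≤ 1 - z₂))
      (by linarith : (0:ℝ) ≤ 1 + 5 * z₂),
    mul_nonneg (mul_nonneg hxm0.le (by linarith : (0:ℝ) ≤ 1 - A)) (sq_nonneg z₁),
    mul_nonneg (mul_nonneg hym0.le (by linarith : (0:ℝ) ≤ 1 - B)) (sq_nonneg z₂)]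
end

section
/- For m = 2 and the unweighted complete graph on D vertices (D ≥ 2): for all z₁,…,z_{D-1} ∈ (0,1], D·∑_j z_j − (D/2)·∑_j z_j² − (D/(2(D-1)))·(∑_j z_j)² ≥ 0. -/
open Finset

theorem completeGraph_CD_m_two (D : ℕ) (hD : 2 ≤ D) (z : Fin (D - 1) → ℝ)
    (hz : ∀ j, z j ∈ Set.Ioc (0 : ℝ) 1) :
    (D : ℝ) * (∑ j, z j) - ((D : ℝ) / 2) * (∑ j, z j ^ 2)
      - ((D : ℝ) / (2 * ((D : ℝ) - 1))) * (∑ j, z j) ^ 2 ≥ 0 := by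
  have hd2 : (2:ℝ) ≤ (D:ℝ) := by exact_mod_cast hD
  have hd0 : (0:ℝ) < (D:ℝ) - 1 := by linarith
  set S := ∑ j, z j with hSdef
  set Q := ∑ j, z j ^ 2 with hQdef
  have hQS : Q ≤ S := Finset.sum_le_sum fun j _ => by
    have h := hz j
    nlinarith [h.1, h.2]
  have hS0 : 0 ≤ S := Finset.sum_nonneg fun j _ => (hz j).1.le
  have hScard : S ≤ (D:ℝ) - 1 := by
    have h1 : S ≤ ∑ _j : Fin (D-1), (1:ℝ) := Finset.sum_le_sum fun j _ => (hz j).2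
    have h2 : (∑ _j : Fin (D-1), (1:ℝ)) = ((D:ℝ) - 1) := by
      simp [Nat.cast_sub (by omega : 1 ≤ D)]
    linarith [h1.trans_eq h2]
  have key : (D:ℝ) * S - (D:ℝ)/2 * Q - (D:ℝ)/(2*((D:ℝ)-1)) * S^2
      = ((D:ℝ)/(2*((D:ℝ)-1))) * (2*((D:ℝ)-1)*S - ((D:ℝ)-1)*Q - S^2) := by
    field_simp
  rw [key]
  apply mul_nonneg
  · positivity
  · nlinarith [mul_nonneg (sub_nonneg.2 hQS) hd0.le, mul_nonneg hS0 (sub_nonneg.2 hScard)]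
end

section
/- Square graph, case analysis 1: if a, b ≥ 0 with 3a − 3 + b ≥ 0, 3b − 3 + a ≥ 0, and c ≥ max(3a−3+b, 3b−3+a), then 12 − 8a² − 8b² + 4c² ≥ 3·(2 − a − b)² whenever 2 > a + b. In fact 12 − 8a² − 8b² + 2(3a−3+b)² + 2(3b−3+a)² = 12(2−a−b)². -/
theorem square_case1 (a b c : ℝ) (ha : 0 ≤ a) (hb : 0 ≤ b)
    (h1 : 0 ≤ 3 * a - 3 + b) (h2 : 0 ≤ 3 * b - 3 + a)
    (hc : c ≥ max (3 * a - 3 + b) (3 * b - 3 + a)) (hab : a + b < 2) :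
    12 - 8 * a ^ 2 - 8 * b ^ 2 + 4 * c ^ 2 ≥ 3 * (2 - a - b) ^ 2 ∧
    12 - 8 * a ^ 2 - 8 * b ^ 2 + 2 * (3 * a - 3 + b) ^ 2 + 2 * (3 * b - 3 + a) ^ 2
      = 12 * (2 - a - b) ^ 2 := by
  have hc1 : c ≥ 3 * a - 3 + b := le_trans (le_max_left _ _) hc
  have hc2 : c ≥ 3 * b - 3 + a := le_trans (le_max_right _ _) hc
  constructor
  · nlinarith [sq_nonneg (c - (3*a-3+b)), sq_nonneg (c - (3*b-3+a)), sq_nonneg (a-b), mul_nonneg h1 (le_of_lt (by linarith : (0:ℝ) < 2 - a - b)), mul_nonneg h2 (le_of_lt (by linarith : (0:ℝ) < 2 - a - b))]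
  · ring
end

section
/- The unweighted 4-cycle with Laplacian L satisfies CD_2(0, 4/3): combining the case analyses, for every u: {x,y₁,y₂,z} → (0,∞) whose pressure v = 2u satisfies −Lv(x) > 0 and −Lv(x) ≥ −Lv(y₁), −Lv(x) ≥ −Lv(y₂), one has 𝒟₂(u)(x) ≥ (3/4)(−Lv(x))², where 𝒟₂(u)(x) = 2Lu²(y₁) + 2Lu²(y₂) − 4Lu²(x). -/
inductive SqV : Type
  | x | y1 | y2 | z
  deriving DecidableEq

instance : Fintype SqV :=
  ⟨{SqV.x, SqV.y1, SqV.y2, SqV.z}, fun a => by cases a <;> simp⟩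

open SqV in
def sqK : SqV → SqV → ℝ
  | .x, .y1 => 1
  | .x, .y2 => 1
  | .y1, .x => 1
  | .y2, .x => 1
  | .z, .y1 => 1
  | .z, .y2 => 1
  | .y1, .z => 1
  | .y2, .z => 1
  | _, _ => 0

noncomputable def sqL (f : SqV → ℝ) (w : SqV) : ℝ :=
  ∑ w' : SqV, sqK w w' * (f w' - f w)

/-!
Write `a, b, c, d` for the values of `u` at `x, y₁, y₂, z`. The Laplacians are explicit and the
claim becomes `3 (2a - b - c)² ≤ 12a² + 4d² - 8b² - 8c²`, given `3b + c ≤ 3a + d` and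
`b + 3c ≤ 3a + d` (the conditions on `-Lv`). With `s = b + c`, `τ = |b - c| ≤ s` and
`p = 3a - 2s` the difference is `4d² + 4(sp - τ²) + s²`. If `τ ≤ p` then `τ² ≤ sp` and we are
done; otherwise `d ≥ τ - p > 0`, and the difference is at least
`(2p + s)² - 8τp = (2p - s)² + 8p(s - τ)`, which is nonnegative when `p > 0`.
-/

lemma square_cd_ineq_of_le {a b c d : ℝ} (hc : 0 ≤ c) (hcb : c ≤ b)
    (hy1 : 3 * b + c ≤ 3 * a + d) :
    3 * (2 * a - b - c) ^ 2 ≤ 12 * a ^ 2 + 4 * d ^ 2 - 8 * b ^ 2 - 8 * c ^ 2 := by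
  rcases le_or_gt (3 * b + c) (3 * a) with hz | hz
  · have hprod : (b - c) * (b - c) ≤ (b + c) * (3 * a - 2 * b - 2 * c) :=
      mul_le_mul (by linarith) (by linarith) (by linarith) (by linarith)
    nlinarith [sq_nonneg d, sq_nonneg (b + c)]
  · have hd : (3 * b + c - 3 * a) ^ 2 ≤ d ^ 2 := pow_le_pow_left₀ (by linarith) (by linarith) 2
    rcases le_or_gt (3 * a - 2 * b - 2 * c) 0 with hp | hp
    · nlinarith [mul_nonneg (sub_nonneg.2 hcb) (neg_nonneg.2 hp),
        sq_nonneg (6 * a - 3 * b - 3 * c)]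
    · nlinarith [mul_nonneg hp.le hc, sq_nonneg (6 * a - 5 * b - 5 * c)]

lemma square_cd_ineq {a b c d : ℝ} (hb : 0 ≤ b) (hc : 0 ≤ c)
    (hy1 : 3 * b + c ≤ 3 * a + d) (hy2 : b + 3 * c ≤ 3 * a + d) :
    3 * (2 * a - b - c) ^ 2 ≤ 12 * a ^ 2 + 4 * d ^ 2 - 8 * b ^ 2 - 8 * c ^ 2 := by
  rcases le_total c b with hcb | hbc
  · exact square_cd_ineq_of_le hc hcb hy1
  · linarith [square_cd_ineq_of_le (a := a) (d := d) hb hbc (by linarith)]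

lemma SqV.sum_univ {M : Type*} [AddCommMonoid M] (g : SqV → M) :
    ∑ w, g w = g .x + g .y1 + g .y2 + g .z := by
  rw [show (Finset.univ : Finset SqV) = {.x, .y1, .y2, .z} from rfl]
  simp [add_assoc]

lemma sqL_x (f : SqV → ℝ) : sqL f .x = f .y1 + f .y2 - 2 * f .x := by
  rw [sqL, SqV.sum_univ]
  simp only [sqK]
  ring

lemma sqL_y1 (f : SqV → ℝ) : sqL f .y1 = f .x + f .z - 2 * f .y1 := by
  rw [sqL, SqV.sum_univ]
  simp only [sqK]
  ring

lemma sqL_y2 (f : SqV → ℝ) : sqL f .y2 = f .x + f .z - 2 * f .y2 := by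
  rw [sqL, SqV.sum_univ]
  simp only [sqK]
  ring

theorem square_CD_two_general (u : SqV → ℝ) (hu : ∀ w, 0 < u w)
    (hy1 : -sqL (fun w => 2 * u w) SqV.x ≥ -sqL (fun w => 2 * u w) SqV.y1)
    (hy2 : -sqL (fun w => 2 * u w) SqV.x ≥ -sqL (fun w => 2 * u w) SqV.y2) :
    2 * sqL (fun w => (u w) ^ 2) SqV.y1 + 2 * sqL (fun w => (u w) ^ 2) SqV.y2
      - 4 * sqL (fun w => (u w) ^ 2) SqV.x
      ≥ (3 / 4) * (-sqL (fun w => 2 * u w) SqV.x) ^ 2 := by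
  simp only [sqL_x, sqL_y1, sqL_y2] at hy1 hy2 ⊢
  have key := square_cd_ineq (a := u .x) (d := u .z) (hu .y1).le (hu .y2).le
    (by linarith) (by linarith)
  linarith

theorem square_CD_two (u : SqV → ℝ) (hu : ∀ w, 0 < u w)
    (hpos : 0 < -sqL (fun w => 2 * u w) SqV.x)
    (hy1 : -sqL (fun w => 2 * u w) SqV.x ≥ -sqL (fun w => 2 * u w) SqV.y1)
    (hy2 : -sqL (fun w => 2 * u w) SqV.x ≥ -sqL (fun w => 2 * u w) SqV.y2) :
    2 * sqL (fun w => (u w) ^ 2) SqV.y1 + 2 * sqL (fun w => (u w) ^ 2) SqV.y2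
      - 4 * sqL (fun w => (u w) ^ 2) SqV.x
      ≥ (3 / 4) * (-sqL (fun w => 2 * u w) SqV.x) ^ 2 :=
  square_CD_two_general u hu hy1 hy2
end

section
/- The chain of 3 vertices fails CD_2(0,d) for every d > 0: with X = {y, x, z}, edges (x,y), (x,z), and the nonnegative function u with u(x)=1, u(y)=3/2, u(z)=0, the pressure v = 2u satisfies −Lv(x) = 1 > 0, −Lv(y) = 1 ≤ −Lv(x), −Lv(z) = −2 ≤ −Lv(x), yet 𝒟₂(u)(x) = 12u(x)² − 6u(y)² − 6u(z)² = −3/2 < 0. -/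
inductive ChV : Type
  | x | y | z
  deriving DecidableEq

instance : Fintype ChV :=
  ⟨{ChV.x, ChV.y, ChV.z}, fun a => by cases a <;> decide⟩

open ChV in
def chK : ChV → ChV → ℝ
  | .x, .y => 1
  | .y, .x => 1
  | .x, .z => 1
  | .z, .x => 1
  | _, _ => 0

noncomputable def chL (f : ChV → ℝ) (w : ChV) : ℝ :=
  ∑ w' : ChV, chK w w' * (f w' - f w)

namespace ChV

lemma sum_univ {M : Type*} [AddCommMonoid M] (f : ChV → M) : ∑ w, f w = f x + f y + f z := by
  rw [show (Finset.univ : Finset ChV) = {x, y, z} from rfl, Finset.sum_insert (by decide),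
    Finset.sum_pair (by decide), add_assoc]

lemma chL_x (f : ChV → ℝ) : chL f x = f y + f z - 2 * f x := by
  simp only [chL, sum_univ, chK]
  ring

lemma chL_y (f : ChV → ℝ) : chL f y = f x - f y := by
  simp only [chL, sum_univ, chK]
  ring

lemma chL_z (f : ChV → ℝ) : chL f z = f x - f z := by
  simp only [chL, sum_univ, chK]
  ring

end ChV

lemma not_one_div_mul_sq_le_of_neg {D d : ℝ} (hD : D < 0) (hd : 0 < d) (a : ℝ) :
    ¬ 1 / d * a ^ 2 ≤ D := by
  have : 0 ≤ 1 / d * a ^ 2 := by positivity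
  linarith

open ChV in
theorem chain3_fails_CD2 (u : ChV → ℝ) (hux : u x = 1) (huy : u y = 3 / 2)
    (huz : u z = 0) :
    -chL (fun w => 2 * u w) x = 1 ∧
    -chL (fun w => 2 * u w) y ≤ -chL (fun w => 2 * u w) x ∧
    -chL (fun w => 2 * u w) z ≤ -chL (fun w => 2 * u w) x ∧
    2 * chL (fun w => (u w) ^ 2) y + 2 * chL (fun w => (u w) ^ 2) z
      - 4 * chL (fun w => (u w) ^ 2) x = -(3 / 2) ∧
    ∀ d : ℝ, 0 < d →
      ¬ (2 * chL (fun w => (u w) ^ 2) y + 2 * chL (fun w => (u w) ^ 2) z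
            - 4 * chL (fun w => (u w) ^ 2) x
          ≥ (1 / d) * (-chL (fun w => 2 * u w) x) ^ 2) := by
  have hD : 2 * chL (fun w => (u w) ^ 2) y + 2 * chL (fun w => (u w) ^ 2) z
      - 4 * chL (fun w => (u w) ^ 2) x = -(3 / 2) := by
    simp only [chL_x, chL_y, chL_z, hux, huy, huz]
    norm_num
  refine ⟨?_, ?_, ?_, hD, fun d hd => not_one_div_mul_sq_le_of_neg (by rw [hD]; norm_num) hd _⟩ <;>
  · simp only [chL_x, chL_y, chL_z, hux, huy, huz]
    norm_num
end

section
/- Key algebraic inequality for the lattice ℤ with CD_{m,1}: for m > 1 and a, b, σ, ν > 0 satisfying σ^{m/(m-1)} ≥ 2a^{m/(m-1)} − 1 − 2a^{1/(m-1)} + a^{(m+1)/(m-1)} + a^{1/(m-1)}b^{m/(m-1)} and ν^{m/(m-1)} ≥ 2b^{m/(m-1)} − 1 − 2b^{1/(m-1)} + b^{(m+1)/(m-1)} + a^{m/(m-1)}b^{1/(m-1)}, one has −2(m-1)(a^{m/(m-1)}+b^{m/(m-1)}−2) − a^{m/(m-1)}(a^{m/(m-1)}+b^{m/(m-1)}−2)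 + ma(σ^{m/(m-1)}+1−2a^{m/(m-1)}) − b^{m/(m-1)}(a^{m/(m-1)}+b^{m/(m-1)}−2) + mb(ν^{m/(m-1)}+1−2b^{m/(m-1)}) ≥ (m-1)(2 − a^{m/(m-1)} − b^{m/(m-1)})². -/
/-!
Write `A = a ^ p`, `α = a ^ q` and likewise `B`, `β` for `b`. Since `q + 1 = p`, we have `a α = A`
and `a ^ ((m + 1) / (m - 1)) = A α`, so the hypothesis at `a` reads
`σ ^ p + 1 - 2 A ≥ α (A + B - 2)`; multiplying by `m a ≥ 0` turns its right side into
`m A (A + B - 2)`, free of `α`. Adding the same bound at `b`, the left side of the claim is at least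
`(A + B - 2) (m (A + B) - 2 (m - 1) - A - B) = (m - 1) (A + B - 2) ^ 2`.
-/

namespace Real

lemma rpow_add_one_div_sub_one {x : ℝ} (hx : 0 < x) (m : ℝ) :
    x ^ ((m + 1) / (m - 1)) = x ^ (m / (m - 1)) * x ^ (1 / (m - 1)) := by
  rw [add_div, rpow_add hx]

lemma mul_rpow_one_div_sub_one {x : ℝ} (hx : 0 < x) {m : ℝ} (hm : m ≠ 1) :
    x * x ^ (1 / (m - 1)) = x ^ (m / (m - 1)) := by
  have hm' : m - 1 ≠ 0 := sub_ne_zero.mpr hm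
  rw [mul_comm, ← rpow_add_one hx.ne']
  congr 1
  field_simp
  ring

end Real

lemma mul_mul_sub_ge_of_mul_eq {m x X Y ξ s : ℝ} (hm : 0 ≤ m) (hx : 0 ≤ x) (hξ : x * ξ = X)
    (hs : s + 1 - 2 * X ≥ ξ * (X + Y - 2)) :
    m * x * (s + 1 - 2 * X) ≥ m * X * (X + Y - 2) :=
  calc m * x * (s + 1 - 2 * X) ≥ m * x * (ξ * (X + Y - 2)) :=
        mul_le_mul_of_nonneg_left hs (mul_nonneg hm hx)
    _ = m * X * (X + Y - 2) := by rw [← hξ]; ring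

theorem lattice_CD_m_one_general (m : ℝ) (hm : 1 < m) (a b σ ν : ℝ)
    (ha : 0 < a) (hb : 0 < b)
    (h2 : σ ^ (m / (m - 1)) ≥ 2 * a ^ (m / (m - 1)) - 1 - 2 * a ^ (1 / (m - 1))
            + a ^ ((m + 1) / (m - 1)) + a ^ (1 / (m - 1)) * b ^ (m / (m - 1)))
    (h3 : ν ^ (m / (m - 1)) ≥ 2 * b ^ (m / (m - 1)) - 1 - 2 * b ^ (1 / (m - 1))
            + b ^ ((m + 1) / (m - 1)) + a ^ (m / (m - 1)) * b ^ (1 / (m - 1))) :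
    -2 * (m - 1) * (a ^ (m / (m - 1)) + b ^ (m / (m - 1)) - 2)
      - a ^ (m / (m - 1)) * (a ^ (m / (m - 1)) + b ^ (m / (m - 1)) - 2)
      + m * a * (σ ^ (m / (m - 1)) + 1 - 2 * a ^ (m / (m - 1)))
      - b ^ (m / (m - 1)) * (a ^ (m / (m - 1)) + b ^ (m / (m - 1)) - 2)
      + m * b * (ν ^ (m / (m - 1)) + 1 - 2 * b ^ (m / (m - 1)))
    ≥ (m - 1) * (2 - a ^ (m / (m - 1)) - b ^ (m / (m - 1))) ^ (2 : ℕ) := by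
  rw [Real.rpow_add_one_div_sub_one ha] at h2
  rw [Real.rpow_add_one_div_sub_one hb] at h3
  have hm0 : 0 ≤ m := by linarith
  have bound_a := mul_mul_sub_ge_of_mul_eq hm0 ha.le (Real.mul_rpow_one_div_sub_one ha hm.ne')
    (Y := b ^ (m / (m - 1))) (s := σ ^ (m / (m - 1))) (by linarith)
  have bound_b := mul_mul_sub_ge_of_mul_eq hm0 hb.le (Real.mul_rpow_one_div_sub_one hb hm.ne')
    (Y := a ^ (m / (m - 1))) (s := ν ^ (m / (m - 1))) (by linarith)
  linear_combination bound_a + bound_b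

theorem lattice_CD_m_one (m : ℝ) (hm : 1 < m) (a b σ ν : ℝ)
    (ha : 0 < a) (hb : 0 < b) (hσ : 0 < σ) (hν : 0 < ν)
    (h2 : σ ^ (m / (m - 1)) ≥ 2 * a ^ (m / (m - 1)) - 1 - 2 * a ^ (1 / (m - 1))
            + a ^ ((m + 1) / (m - 1)) + a ^ (1 / (m - 1)) * b ^ (m / (m - 1)))
    (h3 : ν ^ (m / (m - 1)) ≥ 2 * b ^ (m / (m - 1)) - 1 - 2 * b ^ (1 / (m - 1))
            + b ^ ((m + 1) / (m - 1)) + a ^ (m / (m - 1)) * b ^ (1 / (m - 1))) :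
    -2 * (m - 1) * (a ^ (m / (m - 1)) + b ^ (m / (m - 1)) - 2)
      - a ^ (m / (m - 1)) * (a ^ (m / (m - 1)) + b ^ (m / (m - 1)) - 2)
      + m * a * (σ ^ (m / (m - 1)) + 1 - 2 * a ^ (m / (m - 1)))
      - b ^ (m / (m - 1)) * (a ^ (m / (m - 1)) + b ^ (m / (m - 1)) - 2)
      + m * b * (ν ^ (m / (m - 1)) + 1 - 2 * b ^ (m / (m - 1)))
    ≥ (m - 1) * (2 - a ^ (m / (m - 1)) - b ^ (m / (m - 1))) ^ (2 : ℕ) :=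
  lattice_CD_m_one_general m hm a b σ ν ha hb h2 h3
end

section
/- If m ≥ 2, then for all x ∈ (0,1]: ((m-1)²/m)·x^{m/(m-1)} − (m-1)x + (m-1)/m ≥ (1/2)(x−1)². -/
theorem tildeUpsilon_log_lower_bound_large_m (m : ℝ) (hm : 2 ≤ m)
    (x : ℝ) (hx : x ∈ Set.Ioc (0 : ℝ) 1) :
    ((m - 1) ^ 2 / m) * x ^ (m / (m - 1)) - (m - 1) * x + (m - 1) / m
      ≥ (1 / 2) * (x - 1) ^ (2 : ℕ) := by
  obtain ⟨hx0, hx1⟩ := hx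
  have hm0 : (0 : ℝ) < m := by linarith
  have hm1 : (0 : ℝ) < m - 1 := by linarith
  have hm1' : (1 : ℝ) ≤ m - 1 := by linarith
  set p : ℝ := m / (m - 1) with hp
  have hp1 : p - 1 = 1 / (m - 1) := by
    rw [hp, div_sub_one hm1.ne']; congr 1; ring
  set f : ℝ → ℝ := fun y =>
    ((m - 1) ^ 2 / m) * y ^ p - (m - 1) * y + (m - 1) / m - (1 / 2) * (y - 1) ^ (2 : ℕ)
    with hf
  -- derivative of f on (0, ∞)
  have hderiv : ∀ y ∈ Set.Ioi (0 : ℝ), HasDerivAt f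
      ((m - 1) * y ^ (p - 1) - (m - 1) - (y - 1)) y := by
    intro y hy
    have hy0 : (0 : ℝ) < y := hy
    have h1 : HasDerivAt (fun z : ℝ => z ^ p) (p * y ^ (p - 1)) y :=
      Real.hasDerivAt_rpow_const (Or.inl hy0.ne')
    have h2 : HasDerivAt (fun z : ℝ => (z - 1) ^ (2 : ℕ))
        ((2 : ℕ) * (y - 1) ^ (1 : ℕ) * 1) y :=
      ((hasDerivAt_id y).sub_const 1).pow 2
    have h3 : HasDerivAt f
        (((m - 1) ^ 2 / m) * (p * y ^ (p - 1)) - (m - 1) * 1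
          - (1 / 2) * ((2 : ℕ) * (y - 1) ^ (1 : ℕ) * 1)) y :=
      (((h1.const_mul _).sub ((hasDerivAt_id y).const_mul (m - 1))).add_const
        ((m - 1) / m)).sub (h2.const_mul _)
    convert h3 using 1
    have hc : ((m - 1) ^ 2 / m) * p = m - 1 := by
      rw [hp]; field_simp
    have : ((m - 1) ^ 2 / m) * (p * y ^ (p - 1)) = (m - 1) * y ^ (p - 1) := by
      rw [← mul_assoc, hc]
    rw [this]
    push_cast
    ring
  -- derivative nonpositive via Bernoulli
  have hnonpos : ∀ y ∈ Set.Ioi (0 : ℝ),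
      (m - 1) * y ^ (p - 1) - (m - 1) - (y - 1) ≤ 0 := by
    intro y hy
    have hy0 : (0 : ℝ) < y := hy
    have ht0 : (0 : ℝ) ≤ p - 1 := by rw [hp1]; positivity
    have ht1 : p - 1 ≤ 1 := by
      rw [hp1]; rw [div_le_one hm1]; exact hm1'
    have hb : y ^ (p - 1) ≤ 1 + (p - 1) * (y - 1) := by
      have := rpow_one_add_le_one_add_mul_self (s := y - 1) (by linarith) ht0 ht1
      simpa using this
    have hmul : (m - 1) * y ^ (p - 1) ≤ (m - 1) * (1 + (p - 1) * (y - 1)) :=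
      mul_le_mul_of_nonneg_left hb (le_of_lt hm1)
    have hkey : (m - 1) * (p - 1) = 1 := by rw [hp1]; field_simp
    nlinarith [hmul]
  have hanti : AntitoneOn f (Set.Ioi (0 : ℝ)) := by
    apply antitoneOn_of_hasDerivWithinAt_nonpos (convex_Ioi 0)
      (fun y hy => ((hderiv y hy).continuousAt.continuousWithinAt))
    · intro y hy
      rw [interior_Ioi] at hy
      exact ((hderiv y hy).hasDerivWithinAt)
    · intro y hy
      rw [interior_Ioi] at hy
      exact hnonpos y hy
  have h1mem : (1 : ℝ) ∈ Set.Ioi (0 : ℝ) := by norm_num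
  have hxmem : x ∈ Set.Ioi (0 : ℝ) := hx0
  have hle : f 1 ≤ f x := hanti hxmem h1mem hx1
  have hf1 : f 1 = 0 := by
    simp only [hf, Real.one_rpow]
    field_simp
    ring
  rw [hf1] at hle
  simp only [hf] at hle
  linarith
end

section
/- Integral minimization lemma: let 0 < t₁ < t₂, c, ν > 0, and ψ: [t₁,t₂] → ℝ continuous. Then min_{s∈[t₁,t₂]} ( ψ(s) − (1/c)∫_s^{t₂} τ^{−ν} ψ(τ)² dτ ) ≤ (c/(ν+1))·(t₂^{ν+1} − t₁^{ν+1})/(t₂−t₁)². -/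
/-!
Write `F s` for the bracket and `g τ = τ ^ (-ν) * ψ τ ^ 2`. The minimum of `F` is at most its
average against the weight `s - t₁`, whose mass is `(t₂ - t₁) ^ 2 / 2`. Integrating by parts,
`∫ (s - t₁) ∫_s^{t₂} g = ∫ (s - t₁) ^ 2 / 2 * g s`, so the weighted integral of `F` has integrand
`x - A x ^ 2` with `x = (s - t₁) ψ s` and `A = s ^ (-ν) / (2 c)`. This is at most
`(4 A)⁻¹ = c / 2 * s ^ ν`, and integrating `s ^ ν` gives the bound.
-/

open Set MeasureTheory intervalIntegral
open scoped Interval Topology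

theorem sub_mul_sq_le_inv_four_mul {a : ℝ} (ha : 0 < a) (x : ℝ) : x - a * x ^ 2 ≤ (4 * a)⁻¹ := by
  have h : 0 ≤ a * (2 * a * x - 1) ^ 2 / (4 * a ^ 2) := by positivity
  have : a * (2 * a * x - 1) ^ 2 / (4 * a ^ 2) = (4 * a)⁻¹ - (x - a * x ^ 2) := by
    field_simp; ring
  linarith

theorem sub_rpow_neg_mul_sq_div_le {s c : ℝ} (hs : 0 < s) (hc : 0 < c) (ν x : ℝ) :
    x - s ^ (-ν) * x ^ 2 / (2 * c) ≤ c / 2 * s ^ ν := by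
  have hsν : 0 < s ^ ν := Real.rpow_pos_of_pos hs ν
  have hmax := sub_mul_sq_le_inv_four_mul (a := (s ^ ν)⁻¹ / (2 * c)) (by positivity) x
  rw [Real.rpow_neg hs.le]
  convert hmax using 1
  · ring
  · field_simp; norm_num

theorem exists_mul_integral_le_integral_mul {F w : ℝ → ℝ} {a b : ℝ} (hab : a ≤ b)
    (hF : ContinuousOn F (Icc a b)) (hw : IntervalIntegrable w volume a b)
    (hw₀ : ∀ x ∈ Icc a b, 0 ≤ w x) :
    ∃ s ∈ Icc a b, F s * ∫ x in a..b, w x ≤ ∫ x in a..b, w x * F x := by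
  obtain ⟨s, hs, hmin⟩ := isCompact_Icc.exists_isMinOn (nonempty_Icc.mpr hab) hF
  refine ⟨s, hs, ?_⟩
  rw [mul_comm, ← intervalIntegral.integral_mul_const]
  refine integral_mono_on hab (hw.mul_const _) (hw.mul_continuousOn (by rwa [uIcc_of_le hab])) ?_
  exact fun x hx ↦ mul_le_mul_of_nonneg_left (hmin hx) (hw₀ x hx)

theorem integral_sub_mul_integral_eq {g : ℝ → ℝ} {a b : ℝ} (hg : ContinuousOn g [[a, b]]) :
    ∫ s in a..b, (s - a) * ∫ τ in s..b, g τ = ∫ s in a..b, (s - a) ^ 2 / 2 * g s := by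
  have hG : ∀ x ∈ Ioo (min a b) (max a b), HasDerivAt (fun s ↦ ∫ τ in s..b, g τ) (-g x) x := by
    intro x hx
    have hx' : [[a, b]] ∈ 𝓝 x := Icc_mem_nhds hx.1 hx.2
    refine integral_hasDerivAt_left ?_ ?_ (hg.continuousAt hx')
    · exact (hg.mono (uIcc_subset_uIcc_right (Ioo_subset_Icc_self hx))).intervalIntegrable
    · exact (hg.mono Ioo_subset_Icc_self).stronglyMeasurableAtFilter isOpen_Ioo x hx
  have hu : ∀ x ∈ Ioo (min a b) (max a b), HasDerivAt (fun s ↦ (s - a) ^ 2 / 2) (x - a) x := by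
    intro x _
    refine ((((hasDerivAt_id x).sub_const a).fun_pow 2).div_const 2).congr_deriv ?_
    simp
  have hparts := integral_mul_deriv_eq_deriv_mul_of_hasDerivAt (by fun_prop)
    (continuousOn_primitive_interval_left hg.integrableOn_Icc) hu hG
    ((continuous_sub_right a).intervalIntegrable _ _) hg.intervalIntegrable.neg
  simp only [integral_same, mul_zero, sub_self, zero_pow two_ne_zero, zero_div, zero_mul,
    mul_neg, intervalIntegral.integral_neg] at hparts
  linarith

theorem continuousOn_rpow_const_Icc {a b : ℝ} (ha : 0 < a) (r : ℝ) :
    ContinuousOn (fun s : ℝ ↦ s ^ r) (Icc a b) :=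
  continuousOn_id.rpow_const fun _ hs ↦ Or.inl (ha.trans_le hs.1).ne'

theorem continuousOn_rpow_mul_sq {ψ : ℝ → ℝ} {a b : ℝ} (ha : 0 < a) (r : ℝ)
    (hψ : ContinuousOn ψ (Icc a b)) : ContinuousOn (fun τ ↦ τ ^ r * ψ τ ^ 2) (Icc a b) :=
  (continuousOn_rpow_const_Icc ha r).mul (hψ.pow 2)

theorem continuousOn_integral_rpow_mul_sq {ψ : ℝ → ℝ} {a b : ℝ} (ha : 0 < a) (hab : a ≤ b)
    (r : ℝ) (hψ : ContinuousOn ψ (Icc a b)) :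
    ContinuousOn (fun s ↦ ∫ τ in s..b, τ ^ r * ψ τ ^ 2) (Icc a b) := by
  have hint := (continuousOn_rpow_mul_sq ha r hψ).integrableOn_Icc (μ := volume)
  rw [← uIcc_of_le hab] at hint ⊢
  exact continuousOn_primitive_interval_left hint

theorem integral_sub_mul_sub_integral_rpow_neg_mul_sq_le {ψ : ℝ → ℝ} {a b c : ℝ} (ν : ℝ)
    (ha : 0 < a) (hab : a ≤ b) (hc : 0 < c) (hψ : ContinuousOn ψ (Icc a b)) :
    ∫ s in a..b, (s - a) * (ψ s - 1 / c * ∫ τ in s..b, τ ^ (-ν) * ψ τ ^ 2)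
      ≤ c / 2 * ∫ s in a..b, s ^ ν := by
  have hrpow := continuousOn_rpow_const_Icc (b := b) ha ν
  have hg := continuousOn_rpow_mul_sq ha (-ν) hψ
  have hG := continuousOn_integral_rpow_mul_sq ha hab (-ν) hψ
  have hint (f : ℝ → ℝ) (hf : ContinuousOn f (Icc a b)) : IntervalIntegrable f volume a b :=
    hf.intervalIntegrable_of_Icc hab
  have hpointwise : ∀ s ∈ Icc a b,
      (s - a) * ψ s - 1 / c * ((s - a) ^ 2 / 2 * (s ^ (-ν) * ψ s ^ 2)) ≤ c / 2 * s ^ ν := by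
    intro s hs
    convert sub_rpow_neg_mul_sq_div_le (ha.trans_le hs.1) hc ν ((s - a) * ψ s) using 1
    ring
  calc ∫ s in a..b, (s - a) * (ψ s - 1 / c * ∫ τ in s..b, τ ^ (-ν) * ψ τ ^ 2)
      = ∫ s in a..b, ((s - a) * ψ s - 1 / c * ((s - a) ^ 2 / 2 * (s ^ (-ν) * ψ s ^ 2))) := by
        simp_rw [mul_sub, mul_left_comm _ (1 / c)]
        rw [intervalIntegral.integral_sub, intervalIntegral.integral_sub,
          intervalIntegral.integral_const_mul, intervalIntegral.integral_const_mul,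
          integral_sub_mul_integral_eq (by rwa [uIcc_of_le hab])]
        all_goals exact hint _ (by fun_prop)
    _ ≤ ∫ s in a..b, c / 2 * s ^ ν := by
        exact integral_mono_on hab (hint _ (by fun_prop)) (hint _ (by fun_prop)) hpointwise
    _ = c / 2 * ∫ s in a..b, s ^ ν := intervalIntegral.integral_const_mul _ _

theorem integral_minimization (t₁ t₂ c ν : ℝ) (ht₁ : 0 < t₁) (ht : t₁ < t₂)
    (hc : 0 < c) (hν : 0 < ν) (ψ : ℝ → ℝ) (hψ : ContinuousOn ψ (Set.Icc t₁ t₂)) :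
    ∃ s ∈ Set.Icc t₁ t₂,
      ψ s - (1 / c) * ∫ τ in s..t₂, τ ^ (-ν) * (ψ τ) ^ 2
        ≤ (c / (ν + 1)) * (t₂ ^ (ν + 1) - t₁ ^ (ν + 1)) / (t₂ - t₁) ^ 2 := by
  have hF : ContinuousOn (fun s ↦ ψ s - 1 / c * ∫ τ in s..t₂, τ ^ (-ν) * ψ τ ^ 2) (Icc t₁ t₂) :=
    hψ.sub (continuousOn_const.mul (continuousOn_integral_rpow_mul_sq ht₁ ht.le (-ν) hψ))
  obtain ⟨s, hs, hmin⟩ := exists_mul_integral_le_integral_mul ht.le hF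
    ((continuous_sub_right t₁).intervalIntegrable _ _) fun x hx ↦ sub_nonneg.2 hx.1
  refine ⟨s, hs, ?_⟩
  have hbound := integral_sub_mul_sub_integral_rpow_neg_mul_sq_le ν ht₁ ht.le hc hψ
  rw [integral_rpow (Or.inl (by linarith))] at hbound
  have hweight : ∫ x in t₁..t₂, (x - t₁) = (t₂ - t₁) ^ 2 / 2 := by
    simp only [intervalIntegrable_id, intervalIntegrable_const, intervalIntegral.integral_sub,
      integral_id, intervalIntegral.integral_const, smul_eq_mul]
    ring
  rw [hweight] at hmin
  rw [le_div_iff₀ (pow_pos (sub_pos.2 ht) 2)]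
  linarith [show c / (ν + 1) * (t₂ ^ (ν + 1) - t₁ ^ (ν + 1))
    = 2 * (c / 2 * ((t₂ ^ (ν + 1) - t₁ ^ (ν + 1)) / (ν + 1))) by ring]
end
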